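/- arXiv:1808.07732 — 3 statements merged into one kernel-verified Lean document; each statement's English description precedes it below -/
import Mathlib

section
/- For every positive integer l and every real T > 0 with e^{-T²/2} truncation level, one has 2·∫_{√(2 log(π(l/2+1/2))/(π(l²-1)))}^∞ e^{-π(l²-1)x²} dx ≤ 4/(π^{5/2}·(l+1)²·√(l²-1)), provided l ≥ 2. -/
/-! On `(a, ∞)` with `a √c ≥ 1` the Gaussian `e^{-c x²}` is dominated by `√c · x e^{-c x²}`, whose
integral is elementary: `e^{-c a²} / (2 √c)`. At `a = √(2 log X / c)` this equals `1 / (2 X² √c)`,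
and `a √c = √(2 log X) ≥ 1` as soon as `X ≥ 2 > e^{1/2}`. -/

open Real MeasureTheory Filter Set

theorem integral_Ioi_mul_exp_neg_mul_sq {c : ℝ} (hc : 0 < c) (a : ℝ) :
    ∫ x in Ioi a, x * exp (-c * x ^ 2) = exp (-c * a ^ 2) / (2 * c) := by
  have hderiv (x : ℝ) : HasDerivAt (fun x ↦ -(2 * c)⁻¹ * exp (-c * x ^ 2))
      (x * exp (-c * x ^ 2)) x :=
    (((hasDerivAt_pow 2 x).const_mul (-c)).exp.const_mul _).congr_deriv (by field_simp; ring)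
  have hquad : Tendsto (fun x : ℝ ↦ -c * x ^ 2) atTop atBot :=
    (tendsto_pow_atTop two_ne_zero).const_mul_atTop_of_neg (neg_neg_of_pos hc)
  have hlim : Tendsto (fun x : ℝ ↦ -(2 * c)⁻¹ * exp (-c * x ^ 2)) atTop (nhds 0) := by
    simpa using (tendsto_exp_atBot.comp hquad).const_mul (-(2 * c)⁻¹)
  rw [integral_Ioi_of_hasDerivAt_of_tendsto' (fun x _ ↦ hderiv x)
    (integrable_mul_exp_neg_mul_sq hc).integrableOn hlim]
  field_simp
  ring

theorem integral_Ioi_exp_neg_mul_sq_le {c a : ℝ} (hc : 0 < c) (ha : 1 ≤ a * √c) :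
    ∫ x in Ioi a, exp (-c * x ^ 2) ≤ exp (-c * a ^ 2) / (2 * √c) := by
  have hsc : 0 < √c := sqrt_pos.2 hc
  have hdom : ∫ x in Ioi a, exp (-c * x ^ 2) ≤ ∫ x in Ioi a, √c * (x * exp (-c * x ^ 2)) := by
    refine setIntegral_mono_on (integrable_exp_neg_mul_sq hc).integrableOn
      ((integrable_mul_exp_neg_mul_sq hc).const_mul _).integrableOn measurableSet_Ioi
      fun x hx ↦ ?_
    have : 1 ≤ √c * x := by nlinarith [mem_Ioi.1 hx]
    nlinarith [exp_pos (-c * x ^ 2)]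
  calc ∫ x in Ioi a, exp (-c * x ^ 2)
      ≤ √c * (exp (-c * a ^ 2) / (2 * c)) := by
        rwa [← integral_Ioi_mul_exp_neg_mul_sq hc, ← integral_const_mul]
    _ = exp (-c * a ^ 2) / (2 * √c) := by
        field_simp
        rw [sq_sqrt hc.le]

theorem integral_Ioi_sqrt_log_exp_neg_mul_sq_le {c X : ℝ} (hc : 0 < c) (hX : exp (1 / 2) ≤ X) :
    ∫ x in Ioi √(2 * log X / c), exp (-c * x ^ 2) ≤ 1 / (2 * X ^ 2 * √c) := by
  have hX0 : 0 < X := (exp_pos _).trans_le hX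
  have hlog : 1 ≤ 2 * log X := by linarith [(le_log_iff_exp_le hX0).2 hX]
  have hsq : √(2 * log X / c) ^ 2 * c = 2 * log X := by
    rw [sq_sqrt (by positivity)]
    field_simp
  have hexp : exp (-c * √(2 * log X / c) ^ 2) = (X ^ 2)⁻¹ := by
    rw [show -c * √(2 * log X / c) ^ 2 = -(log X * 2) by linarith, exp_neg, exp_mul, exp_log hX0,
      rpow_two]
  have hroot : 1 ≤ √(2 * log X / c) * √c := by
    rw [← sqrt_mul (by positivity), div_mul_cancel₀ _ hc.ne']
    exact one_le_sqrt.2 hlog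
  calc _ ≤ _ := integral_Ioi_exp_neg_mul_sq_le hc hroot
    _ = _ := by rw [hexp]; field_simp

theorem stmt6 (l : ℕ) (hl : 2 ≤ l) :
    2 * ∫ x in Set.Ioi
        (Real.sqrt (2 * Real.log (π * ((l : ℝ) / 2 + 1 / 2)) / (π * ((l : ℝ) ^ 2 - 1)))),
        Real.exp (-π * ((l : ℝ) ^ 2 - 1) * x ^ 2) ≤
      4 / (π ^ ((5 : ℝ) / 2) * ((l : ℝ) + 1) ^ 2 * Real.sqrt ((l : ℝ) ^ 2 - 1)) := by
  have hl2 : (2 : ℝ) ≤ l := by exact_mod_cast hl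
  have hc : 0 < π * ((l : ℝ) ^ 2 - 1) := mul_pos pi_pos (by nlinarith)
  have hX : exp (1 / 2) ≤ π * ((l : ℝ) / 2 + 1 / 2) := by
    have : exp (1 / 2) ≤ 2 := by
      rw [← le_log_iff_exp_le two_pos]
      linarith [log_two_gt_d9]
    nlinarith [pi_gt_three]
  have hpow : π ^ ((5 : ℝ) / 2) = π ^ 2 * √π := by
    rw [show (5 : ℝ) / 2 = 2 + 1 / 2 by norm_num, rpow_add pi_pos, rpow_two, sqrt_eq_rpow]
  rw [neg_mul π]
  calc _ ≤ 2 * (1 / (2 * (π * ((l : ℝ) / 2 + 1 / 2)) ^ 2 * √(π * ((l : ℝ) ^ 2 - 1)))) := by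
        gcongr
        exact integral_Ioi_sqrt_log_exp_neg_mul_sq_le hc hX
    _ = _ := by
        rw [sqrt_mul pi_pos.le, hpow]
        field_simp
        ring
end

section
/- Let l be a positive integer, k an integer with 1 ≤ k ≤ l/2 - 1, and let g(x) = |sin(lπx)/(l sin πx)|. Then for every x ∈ (k/l, (k+1)/l), the derivative of sin(lπx)/(l sin πx) satisfies |d/dx [sin(lπx)/(l sin πx)]| ≤ (π/sin(πx))·(πx/sin(kπ/l)) ≤ lπ²/(4k). -/
open Real

/- Writing `N = cos (L θ) sin θ - sin (L θ) cos θ / L` for the numerator of the derivative at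
`θ = π x`, one has `|sin (L θ)| = |sin (L θ) - sin (L α)| ≤ L (θ - α)` at a zero `α` of `sin (L ·)`,
so `|N| ≤ sin θ + (θ - sin α) ≤ θ sin θ / sin α` as `sin α ≤ sin θ`. The second inequality is
Jordan's inequality `sin t ≥ 2 t / π`, applied at `π x` and at `k π / l`. -/

theorem deriv_sin_mul_div_mul_sin {L : ℝ} (hL : L ≠ 0) {x : ℝ} (hx : sin (π * x) ≠ 0) :
    deriv (fun t : ℝ => sin (L * π * t) / (L * sin (π * t))) x =
      π * (cos (L * (π * x)) * sin (π * x) - sin (L * (π * x)) * cos (π * x) / L) /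
        sin (π * x) ^ 2 := by
  have hnum : HasDerivAt (fun t : ℝ => sin (L * π * t)) (cos (L * π * x) * (L * π)) x := by
    simpa using ((hasDerivAt_id x).const_mul (L * π)).sin
  have hden : HasDerivAt (fun t : ℝ => L * sin (π * t)) (L * (cos (π * x) * π)) x := by
    simpa using (((hasDerivAt_id x).const_mul π).sin).const_mul L
  rw [(hnum.fun_div hden (mul_ne_zero hL hx)).deriv, mul_assoc L π x]
  field_simp

theorem abs_cos_mul_sin_sub_sin_mul_cos_div_le {L α θ : ℝ} (hL : 0 < L) (hα : 0 < α)
    (hαθ : α ≤ θ) (hθ : θ ≤ π / 2) (hLα : sin (L * α) = 0) :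
    |cos (L * θ) * sin θ - sin (L * θ) * cos θ / L| ≤ θ * sin θ / sin α := by
  have hσ : 0 < sin α := sin_pos_of_pos_of_lt_pi hα (by linarith [pi_pos])
  have hσα : sin α ≤ α := sin_le hα.le
  have hσs : sin α ≤ sin θ :=
    strictMonoOn_sin.monotoneOn ⟨by linarith [pi_pos], by linarith⟩ ⟨by linarith, hθ⟩ hαθ
  have hS : |sin (L * θ)| ≤ L * (θ - α) := by
    have h := abs_sin_sub_sin_le (L * θ) (L * α)
    rwa [hLα, sub_zero, ← mul_sub, abs_of_nonneg (a := L * (θ - α)) (by nlinarith)] at h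
  have hfirst : |cos (L * θ) * sin θ| ≤ sin θ := by
    rw [abs_mul, abs_of_pos (hσ.trans_le hσs)]
    exact mul_le_of_le_one_left (by linarith) (abs_cos_le_one _)
  have hsecond : |sin (L * θ) * cos θ / L| ≤ θ - sin α := by
    rw [abs_div, abs_mul, abs_of_pos hL, div_le_iff₀ hL]
    nlinarith [abs_nonneg (sin (L * θ)), abs_cos_le_one θ, abs_nonneg (cos θ)]
  have hθσ : θ - sin α ≤ (θ - sin α) * (sin θ / sin α) :=
    le_mul_of_one_le_right (by linarith) ((one_le_div hσ).2 hσs)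
  calc |cos (L * θ) * sin θ - sin (L * θ) * cos θ / L|
      ≤ |cos (L * θ) * sin θ| + |sin (L * θ) * cos θ / L| := abs_sub _ _
    _ ≤ sin θ + (θ - sin α) * (sin θ / sin α) := by linarith
    _ = θ * sin θ / sin α := by field_simp; ring

theorem abs_deriv_sin_mul_div_mul_sin_le {L α x : ℝ} (hL : 0 < L) (hα : 0 < α)
    (hαx : α ≤ π * x) (hx : π * x ≤ π / 2) (hLα : sin (L * α) = 0) :
    |deriv (fun t : ℝ => sin (L * π * t) / (L * sin (π * t))) x| ≤
      (π / sin (π * x)) * (π * x / sin α) := by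
  have hs : 0 < sin (π * x) := sin_pos_of_pos_of_lt_pi (by linarith) (by linarith [pi_pos])
  rw [deriv_sin_mul_div_mul_sin hL.ne' hs.ne', abs_div, abs_mul, abs_of_pos pi_pos,
    abs_of_pos (pow_pos hs 2)]
  calc π * |cos (L * (π * x)) * sin (π * x) - sin (L * (π * x)) * cos (π * x) / L| /
        sin (π * x) ^ 2
      ≤ π * (π * x * sin (π * x) / sin α) / sin (π * x) ^ 2 := by
        gcongr
        exact abs_cos_mul_sin_sub_sin_mul_cos_div_le hL hα hαx hx hLα
    _ = (π / sin (π * x)) * (π * x / sin α) := by field_simp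

theorem two_mul_le_sin_pi_mul {x : ℝ} (hx₀ : 0 ≤ x) (hx₁ : x ≤ 1 / 2) : 2 * x ≤ sin (π * x) := by
  have h := mul_le_sin (by positivity : 0 ≤ π * x) (by nlinarith [pi_pos])
  rwa [← mul_assoc, div_mul_cancel₀ _ pi_ne_zero] at h

theorem pi_div_sin_pi_mul_mul_le {x y : ℝ} (hx₀ : 0 < x) (hx₁ : x ≤ 1 / 2) (hy₀ : 0 < y)
    (hy₁ : y ≤ 1 / 2) :
    (π / sin (π * x)) * (π * x / sin (π * y)) ≤ π ^ 2 / (4 * y) := by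
  have hsx := two_mul_le_sin_pi_mul hx₀.le hx₁
  have hsy := two_mul_le_sin_pi_mul hy₀.le hy₁
  calc (π / sin (π * x)) * (π * x / sin (π * y)) = π ^ 2 * x / (sin (π * x) * sin (π * y)) := by
        field_simp
    _ ≤ π ^ 2 * x / (2 * x * (2 * y)) := by gcongr; linarith
    _ = π ^ 2 / (4 * y) := by field_simp; ring

theorem stmt10 (l : ℕ) (hl : 0 < l) (k : ℕ) (hk1 : 1 ≤ k) (hk2 : (k : ℝ) ≤ (l : ℝ) / 2 - 1)
    (x : ℝ) (hx : x ∈ Set.Ioo ((k : ℝ) / (l : ℝ)) (((k : ℝ) + 1) / (l : ℝ))) :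
    |deriv (fun t : ℝ => Real.sin ((l : ℝ) * π * t) / ((l : ℝ) * Real.sin (π * t))) x| ≤
        (π / Real.sin (π * x)) * (π * x / Real.sin ((k : ℝ) * π / (l : ℝ))) ∧
      (π / Real.sin (π * x)) * (π * x / Real.sin ((k : ℝ) * π / (l : ℝ))) ≤
        (l : ℝ) * π ^ 2 / (4 * (k : ℝ)) := by
  obtain ⟨hkx, hxk⟩ := hx
  have hl' : (0 : ℝ) < l := Nat.cast_pos.2 hl
  have hk : (0 : ℝ) < k / l := div_pos (Nat.cast_pos.2 hk1) hl'
  have hk₁ : ((k : ℝ) + 1) / l ≤ 1 / 2 := by rw [div_le_iff₀ hl']; linarith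
  have hα : (k : ℝ) * π / l = π * (k / l) := by ring
  have hlα : sin (l * (π * (k / l))) = 0 := by
    rw [mul_left_comm, mul_div_cancel₀ _ hl'.ne', mul_comm]
    exact sin_nat_mul_pi k
  rw [hα]
  constructor
  · exact abs_deriv_sin_mul_div_mul_sin_le hl' (by positivity)
      (mul_le_mul_of_nonneg_left hkx.le pi_pos.le) (by nlinarith [pi_pos]) hlα
  · calc (π / sin (π * x)) * (π * x / sin (π * (k / l)))
        ≤ π ^ 2 / (4 * (k / l)) :=
          pi_div_sin_pi_mul_mul_le (hk.trans hkx) (hxk.le.trans hk₁) hk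
            ((div_le_div_of_nonneg_right (by linarith) hl'.le).trans hk₁)
      _ = l * π ^ 2 / (4 * k) := by field_simp
end

section
/- Let f, g : ℝ → [0,∞) be measurable with distribution functions F(y) = λ{x : f(x) > y} and G(y) = λ{x : g(x) > y} finite for all y > 0. Suppose that at some y₀ > 0 the difference F - G changes sign from − to + (i.e., F - G ≤ 0 on (0, y₀) and F - G ≥ 0 on (y₀, ∞)). Then the function φ(p) = (1/(p·y₀^p))·∫_ℝ (f^p − g^p) dλ is nondecreasing in p on the set of p > 0 where f^p − g^p ∈ L¹(ℝ). In particular, if ∫(f^{p₀} − g^{p₀}) dλ ≥ 0 then ∫(f^p − g^p) dλ ≥ 0 for all p > p₀. -/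
open MeasureTheory Set

lemma ptwise (p : ℝ) (hp : 0 < p) (a b : ℝ) (ha : 0 ≤ a) (hab : a ≤ b) :
    ENNReal.ofReal (b ^ p - a ^ p) =
      ∫⁻ y in {y : ℝ | a ≤ y ∧ y < b ∧ 0 < y}, ENNReal.ofReal (p * y ^ (p - 1)) := by
  have hset : {y : ℝ | a ≤ y ∧ y < b ∧ 0 < y} =ᵐ[volume] Ioc a b := by
    rcases ha.eq_or_lt with h0 | h0
    · have : {y : ℝ | a ≤ y ∧ y < b ∧ 0 < y} = Ioo a b := by
        ext y; simp only [mem_setOf_eq, mem_Ioo, ← h0]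
        constructor
        · rintro ⟨_, h2, h3⟩; exact ⟨h3, h2⟩
        · rintro ⟨h1, h2⟩; exact ⟨le_of_lt h1, h2, h1⟩
      rw [this]; exact Ioo_ae_eq_Ioc
    · have : {y : ℝ | a ≤ y ∧ y < b ∧ 0 < y} = Ico a b := by
        ext y; simp only [mem_setOf_eq, mem_Ico]
        exact ⟨fun ⟨h1, h2, _⟩ => ⟨h1, h2⟩, fun ⟨h1, h2⟩ => ⟨h1, h2, lt_of_lt_of_le h0 h1⟩⟩
      rw [this]; exact Ico_ae_eq_Ioc
  rw [setLIntegral_congr hset]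
  have hint : IntegrableOn (fun y : ℝ => p * y ^ (p - 1)) (Ioc a b) := by
    have := (intervalIntegrable_iff_integrableOn_Ioc_of_le hab).mp
      (intervalIntegral.intervalIntegrable_rpow' (a := a) (b := b) (r := p - 1) (by linarith))
    exact this.const_mul p
  rw [← ofReal_integral_eq_lintegral_ofReal hint]
  · congr 1
    rw [← intervalIntegral.integral_of_le hab, intervalIntegral.integral_const_mul,
      integral_rpow (Or.inl (by linarith))]
    have : p - 1 + 1 = p := by ring
    rw [this]
    field_simp
  · filter_upwards [ae_restrict_mem measurableSet_Ioc] with y hy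
    have hy0 : 0 ≤ y := le_trans ha (le_of_lt hy.1)
    positivity

lemma layercake_diff (u v : ℝ → ℝ) (hu : Measurable u) (hv : Measurable v)
    (hv0 : ∀ x, 0 ≤ v x) (hvu : ∀ x, v x ≤ u x) (p : ℝ) (hp : 0 < p) :
    ∫⁻ x, ENNReal.ofReal (u x ^ p - v x ^ p) =
      ∫⁻ y in Ioi (0:ℝ), ENNReal.ofReal (p * y ^ (p - 1)) *
        volume {x | v x ≤ y ∧ y < u x} := by
  set E : Set (ℝ × ℝ) := {z | v z.1 ≤ z.2 ∧ z.2 < u z.1 ∧ 0 < z.2} with hE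
  set W : ℝ × ℝ → ENNReal := fun z => ENNReal.ofReal (p * z.2 ^ (p - 1)) with hW
  have hEmeas : MeasurableSet E := by
    apply MeasurableSet.inter (measurableSet_le (hv.comp measurable_fst) measurable_snd)
    exact MeasurableSet.inter (measurableSet_lt measurable_snd (hu.comp measurable_fst))
      (measurableSet_lt measurable_const measurable_snd)
  have hWmeas : Measurable W := by measurability
  have key : ∀ x : ℝ, ENNReal.ofReal (u x ^ p - v x ^ p) =
      ∫⁻ y, E.indicator W (x, y) := by
    intro x
    rw [ptwise p hp (v x) (u x) (hv0 x) (hvu x)]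
    have hms : MeasurableSet {y : ℝ | v x ≤ y ∧ y < u x ∧ 0 < y} := by
      apply MeasurableSet.inter (measurableSet_le measurable_const measurable_id)
      exact MeasurableSet.inter (measurableSet_lt measurable_id measurable_const)
        (measurableSet_lt measurable_const measurable_id)
    rw [← lintegral_indicator hms]
    apply lintegral_congr
    intro y
    simp only [indicator, mem_setOf_eq, hE, hW]
  simp_rw [key]
  have huncur : Function.uncurry (fun x y => E.indicator W (x, y)) = E.indicator W := by
    ext z; simp [Function.uncurry]
  rw [lintegral_lintegral_swap (by rw [huncur]; exact (hWmeas.indicator hEmeas).aemeasurable)]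
  rw [← lintegral_indicator measurableSet_Ioi]
  congr 1
  ext y
  rcases le_or_gt y 0 with hy | hy
  · have h1 : ∀ x : ℝ, E.indicator W (x, y) = 0 := by
      intro x
      apply indicator_of_notMem
      rintro ⟨-, -, h3⟩
      exact absurd h3 (not_lt.mpr hy)
    simp only [h1, lintegral_const, zero_mul, indicator_of_notMem (notMem_Ioi.mpr hy)]
  · rw [indicator_of_mem (mem_Ioi.mpr hy)]
    have hsm : MeasurableSet {x | v x ≤ y ∧ y < u x} := by
      apply MeasurableSet.inter (measurableSet_le hv measurable_const)
      exact measurableSet_lt measurable_const hu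
    have h1 : ∀ x : ℝ, E.indicator W (x, y)
        = ({x | v x ≤ y ∧ y < u x}).indicator (fun _ => ENNReal.ofReal (p * y ^ (p - 1))) x := by
      intro x
      simp only [indicator, hE, hW, mem_setOf_eq]
      by_cases h : v x ≤ y ∧ y < u x
      · simp [h, hy]
      · rw [if_neg (by tauto), if_neg h]
    simp_rw [h1]
    rw [lintegral_indicator hsm, setLIntegral_const]

lemma repr_lemma (f g : ℝ → ℝ) (hf : Measurable f) (hg : Measurable g)
    (hf0 : ∀ x, 0 ≤ f x) (hg0 : ∀ x, 0 ≤ g x)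
    (F G : ℝ → ℝ)
    (hF : ∀ y, F y = (volume {x : ℝ | y < f x}).toReal)
    (hG : ∀ y, G y = (volume {x : ℝ | y < g x}).toReal)
    (hFfin : ∀ y : ℝ, 0 < y → volume {x : ℝ | y < f x} ≠ ⊤)
    (hGfin : ∀ y : ℝ, 0 < y → volume {x : ℝ | y < g x} ≠ ⊤)
    (y₀ : ℝ) (hy₀ : 0 < y₀) (p : ℝ) (hp : 0 < p)
    (hI : Integrable (fun x => f x ^ p - g x ^ p)) :
    IntegrableOn (fun y => (y ^ (p - 1) / y₀ ^ p) * (F y - G y)) (Ioi (0:ℝ)) ∧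
    (1 / (p * y₀ ^ p)) * ∫ x, (f x ^ p - g x ^ p) =
      ∫ y in Ioi (0:ℝ), (y ^ (p - 1) / y₀ ^ p) * (F y - G y) := by
  set A : ℝ → Set ℝ := fun y => {x | g x ≤ y ∧ y < f x} with hA
  set B : ℝ → Set ℝ := fun y => {x | f x ≤ y ∧ y < g x} with hB
  -- positive and negative parts
  have posint : Integrable (fun x => max (f x ^ p - g x ^ p) 0) := hI.pos_part
  have negint : Integrable (fun x => max (g x ^ p - f x ^ p) 0) := by
    have := hI.neg.pos_part
    simpa using this
  have hmaxf : ∀ x, max (f x) (g x) ^ p - g x ^ p = max (f x ^ p - g x ^ p) 0 := by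
    intro x
    rcases le_total (f x) (g x) with h | h
    · rw [max_eq_right h, max_eq_right (by nlinarith [Real.rpow_le_rpow (hf0 x) h (le_of_lt hp)])]
      ring
    · rw [max_eq_left h, max_eq_left (by nlinarith [Real.rpow_le_rpow (hg0 x) h (le_of_lt hp)])]
  have hmaxg : ∀ x, max (f x) (g x) ^ p - f x ^ p = max (g x ^ p - f x ^ p) 0 := by
    intro x
    rcases le_total (f x) (g x) with h | h
    · rw [max_eq_right h, max_eq_left (by nlinarith [Real.rpow_le_rpow (hf0 x) h (le_of_lt hp)])]
    · rw [max_eq_left h, max_eq_right (by nlinarith [Real.rpow_le_rpow (hg0 x) h (le_of_lt hp)])]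
      ring
  have hsetA : ∀ y : ℝ, {x | g x ≤ y ∧ y < max (f x) (g x)} = A y := by
    intro y; ext x
    simp only [hA, mem_setOf_eq, lt_max_iff]
    constructor
    · rintro ⟨h1, h2 | h2⟩
      · exact ⟨h1, h2⟩
      · exact absurd h1 (not_le.mpr h2)
    · rintro ⟨h1, h2⟩; exact ⟨h1, Or.inl h2⟩
  have hsetB : ∀ y : ℝ, {x | f x ≤ y ∧ y < max (f x) (g x)} = B y := by
    intro y; ext x
    simp only [hB, mem_setOf_eq, lt_max_iff]
    constructor
    · rintro ⟨h1, h2 | h2⟩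
      · exact absurd h1 (not_le.mpr h2)
      · exact ⟨h1, h2⟩
    · rintro ⟨h1, h2⟩; exact ⟨h1, Or.inr h2⟩
  have ΦA : ENNReal.ofReal (∫ x, max (f x ^ p - g x ^ p) 0) =
      ∫⁻ y in Ioi (0:ℝ), ENNReal.ofReal (p * y ^ (p - 1)) * volume (A y) := by
    rw [ofReal_integral_eq_lintegral_ofReal posint (Filter.Eventually.of_forall fun x => le_max_right _ _)]
    have := layercake_diff (fun x => max (f x) (g x)) g (hf.max hg) hg hg0
      (fun x => le_max_right _ _) p hp
    simp_rw [hmaxf, hsetA] at this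
    exact this
  have ΦB : ENNReal.ofReal (∫ x, max (g x ^ p - f x ^ p) 0) =
      ∫⁻ y in Ioi (0:ℝ), ENNReal.ofReal (p * y ^ (p - 1)) * volume (B y) := by
    rw [ofReal_integral_eq_lintegral_ofReal negint (Filter.Eventually.of_forall fun x => le_max_right _ _)]
    have := layercake_diff (fun x => max (f x) (g x)) f (hf.max hg) hf hf0
      (fun x => le_max_left _ _) p hp
    simp_rw [hmaxg, hsetB] at this
    exact this
  -- measurability of distribution-type functions
  have hAm : Measurable fun y => volume (A y) := by
    have hs : MeasurableSet {z : ℝ × ℝ | g z.2 ≤ z.1 ∧ z.1 < f z.2} :=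
      (measurableSet_le (hg.comp measurable_snd) measurable_fst).inter
        (measurableSet_lt measurable_fst (hf.comp measurable_snd))
    exact measurable_measure_prodMk_left hs
  have hBm : Measurable fun y => volume (B y) := by
    have hs : MeasurableSet {z : ℝ × ℝ | f z.2 ≤ z.1 ∧ z.1 < g z.2} :=
      (measurableSet_le (hf.comp measurable_snd) measurable_fst).inter
        (measurableSet_lt measurable_fst (hg.comp measurable_snd))
    exact measurable_measure_prodMk_left hs
  have hwm : Measurable fun y : ℝ => ENNReal.ofReal (p * y ^ (p - 1)) := by measurability
  have hAfin : ∀ y : ℝ, 0 < y → volume (A y) ≠ ⊤ := fun y hy =>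
    ne_top_of_le_ne_top (hFfin y hy) (measure_mono fun x hx => hx.2)
  have hBfin : ∀ y : ℝ, 0 < y → volume (B y) ≠ ⊤ := fun y hy =>
    ne_top_of_le_ne_top (hGfin y hy) (measure_mono fun x hx => hx.2)
  -- convert to real integrals
  have hconv : ∀ (S : ℝ → Set ℝ), Measurable (fun y => volume (S y)) →
      (∀ y : ℝ, 0 < y → volume (S y) ≠ ⊤) →
      ∀ c : ℝ, ENNReal.ofReal c =
        ∫⁻ y in Ioi (0:ℝ), ENNReal.ofReal (p * y ^ (p - 1)) * volume (S y) →
      IntegrableOn (fun y => p * y ^ (p - 1) * (volume (S y)).toReal) (Ioi (0:ℝ)) ∧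
        ∫ y in Ioi (0:ℝ), p * y ^ (p - 1) * (volume (S y)).toReal = max c 0 := by
    intro S hSm hSfin c hc
    have hmeas : AEMeasurable (fun y => ENNReal.ofReal (p * y ^ (p - 1)) * volume (S y))
        (volume.restrict (Ioi (0:ℝ))) := (hwm.mul hSm).aemeasurable
    have hne : ∫⁻ y in Ioi (0:ℝ), ENNReal.ofReal (p * y ^ (p - 1)) * volume (S y) ≠ ⊤ := by
      rw [← hc]; exact ENNReal.ofReal_ne_top
    have hlt : ∀ᵐ y ∂(volume.restrict (Ioi (0:ℝ))),
        ENNReal.ofReal (p * y ^ (p - 1)) * volume (S y) < ⊤ := by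
      filter_upwards [ae_restrict_mem measurableSet_Ioi] with y hy
      exact ENNReal.mul_lt_top ENNReal.ofReal_lt_top (lt_top_iff_ne_top.mpr (hSfin y hy))
    have heqon : EqOn (fun y => (ENNReal.ofReal (p * y ^ (p - 1)) * volume (S y)).toReal)
        (fun y => p * y ^ (p - 1) * (volume (S y)).toReal) (Ioi (0:ℝ)) := by
      intro y hy
      have hy' : (0:ℝ) < y := hy
      simp only [ENNReal.toReal_mul]
      rw [ENNReal.toReal_ofReal (by positivity)]
    constructor
    · exact ((integrable_toReal_of_lintegral_ne_top hmeas hne).congr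
        ((ae_restrict_iff' measurableSet_Ioi).mpr (Filter.Eventually.of_forall fun y hy => heqon hy)))
    · rw [← setIntegral_congr_fun measurableSet_Ioi heqon, integral_toReal hmeas hlt, ← hc,
        ENNReal.toReal_ofReal']
  have hposnn : 0 ≤ ∫ x, max (f x ^ p - g x ^ p) 0 :=
    integral_nonneg fun x => le_max_right _ _
  have hnegnn : 0 ≤ ∫ x, max (g x ^ p - f x ^ p) 0 :=
    integral_nonneg fun x => le_max_right _ _
  obtain ⟨hαint, hαeq⟩ := hconv A hAm hAfin _ ΦA
  obtain ⟨hβint, hβeq⟩ := hconv B hBm hBfin _ ΦB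
  rw [max_eq_left hposnn] at hαeq
  rw [max_eq_left hnegnn] at hβeq
  -- F - G = toReal A - toReal B on Ioi 0
  have hFG : ∀ y : ℝ, 0 < y →
      (volume (A y)).toReal - (volume (B y)).toReal = F y - G y := by
    intro y hy
    have hCfin : volume {x | y < f x ∧ y < g x} ≠ ⊤ :=
      ne_top_of_le_ne_top (hFfin y hy) (measure_mono fun x hx => hx.1)
    have hdf : {x | y < f x} = {x | y < f x ∧ y < g x} ∪ A y := by
      ext x
      simp only [mem_setOf_eq, mem_union, hA]
      constructor
      · intro h
        rcases le_or_gt (g x) y with h2 | h2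
        · exact Or.inr ⟨h2, h⟩
        · exact Or.inl ⟨h, h2⟩
      · rintro (⟨h1, _⟩ | ⟨_, h1⟩) <;> exact h1
    have hdg : {x | y < g x} = {x | y < f x ∧ y < g x} ∪ B y := by
      ext x
      simp only [mem_setOf_eq, mem_union, hB]
      constructor
      · intro h
        rcases le_or_gt (f x) y with h2 | h2
        · exact Or.inr ⟨h2, h⟩
        · exact Or.inl ⟨h2, h⟩
      · rintro (⟨_, h1⟩ | ⟨_, h1⟩) <;> exact h1
    have hdisjf : Disjoint {x | y < f x ∧ y < g x} (A y) := by
      rw [Set.disjoint_left]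
      rintro x ⟨-, h2⟩ ⟨h3, -⟩
      exact absurd h3 (not_le.mpr h2)
    have hdisjg : Disjoint {x | y < f x ∧ y < g x} (B y) := by
      rw [Set.disjoint_left]
      rintro x ⟨h1, -⟩ ⟨h3, -⟩
      exact absurd h3 (not_le.mpr h1)
    have hmA : MeasurableSet (A y) :=
      (measurableSet_le hg measurable_const).inter (measurableSet_lt measurable_const hf)
    have hmB : MeasurableSet (B y) :=
      (measurableSet_le hf measurable_const).inter (measurableSet_lt measurable_const hg)
    rw [hF, hG, hdf, hdg, measure_union hdisjf hmA, measure_union hdisjg hmB,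
      ENNReal.toReal_add hCfin (hAfin y hy), ENNReal.toReal_add hCfin (hBfin y hy)]
    ring
  -- main identity
  have hsplit : ∫ x, (f x ^ p - g x ^ p) =
      (∫ x, max (f x ^ p - g x ^ p) 0) - ∫ x, max (g x ^ p - f x ^ p) 0 := by
    rw [← integral_sub posint negint]
    congr 1
    funext x
    rcases le_total (f x ^ p) (g x ^ p) with h | h
    · rw [max_eq_right (by linarith), max_eq_left (by linarith)]; ring
    · rw [max_eq_left (by linarith), max_eq_right (by linarith)]; ring
  have hne0 : p * y₀ ^ p ≠ 0 := by positivity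
  have heqfin : EqOn (fun y => (1 / (p * y₀ ^ p)) *
        (p * y ^ (p - 1) * (volume (A y)).toReal - p * y ^ (p - 1) * (volume (B y)).toReal))
      (fun y => (y ^ (p - 1) / y₀ ^ p) * (F y - G y)) (Ioi (0:ℝ)) := by
    intro y hy
    have hy' : (0:ℝ) < y := hy
    simp only
    rw [← hFG y hy']
    field_simp
  constructor
  · apply IntegrableOn.congr_fun _ heqfin measurableSet_Ioi
    exact ((hαint.sub hβint).const_mul _)
  · rw [hsplit, ← hαeq, ← hβeq, ← setIntegral_congr_fun measurableSet_Ioi heqfin,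
      ← integral_sub hαint hβint, ← integral_const_mul]
theorem stmt14 (f g : ℝ → ℝ) (hf : Measurable f) (hg : Measurable g)
    (hf0 : ∀ x, 0 ≤ f x) (hg0 : ∀ x, 0 ≤ g x)
    (F G : ℝ → ℝ)
    (hF : ∀ y, F y = (volume {x : ℝ | y < f x}).toReal)
    (hG : ∀ y, G y = (volume {x : ℝ | y < g x}).toReal)
    (hFfin : ∀ y : ℝ, 0 < y → volume {x : ℝ | y < f x} ≠ ⊤)
    (hGfin : ∀ y : ℝ, 0 < y → volume {x : ℝ | y < g x} ≠ ⊤)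
    (y₀ : ℝ) (hy₀ : 0 < y₀)
    (hsign₁ : ∀ y : ℝ, 0 < y → y < y₀ → F y ≤ G y)
    (hsign₂ : ∀ y : ℝ, y₀ < y → G y ≤ F y) :
    (∀ p q : ℝ, 0 < p → p ≤ q →
        Integrable (fun x => f x ^ p - g x ^ p) →
        Integrable (fun x => f x ^ q - g x ^ q) →
        (1 / (p * y₀ ^ p)) * ∫ x, (f x ^ p - g x ^ p) ≤
          (1 / (q * y₀ ^ q)) * ∫ x, (f x ^ q - g x ^ q)) ∧
    (∀ p₀ p : ℝ, 0 < p₀ → p₀ < p →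
        Integrable (fun x => f x ^ p₀ - g x ^ p₀) →
        Integrable (fun x => f x ^ p - g x ^ p) →
        0 ≤ ∫ x, (f x ^ p₀ - g x ^ p₀) → 0 ≤ ∫ x, (f x ^ p - g x ^ p)) := by
  have main : ∀ p q : ℝ, 0 < p → p ≤ q →
      Integrable (fun x => f x ^ p - g x ^ p) →
      Integrable (fun x => f x ^ q - g x ^ q) →
      (1 / (p * y₀ ^ p)) * ∫ x, (f x ^ p - g x ^ p) ≤
        (1 / (q * y₀ ^ q)) * ∫ x, (f x ^ q - g x ^ q) := by
    intro p q hp hpq hIp hIq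
    have hq : 0 < q := lt_of_lt_of_le hp hpq
    obtain ⟨hintp, heqp⟩ := repr_lemma f g hf hg hf0 hg0 F G hF hG hFfin hGfin y₀ hy₀ p hp hIp
    obtain ⟨hintq, heqq⟩ := repr_lemma f g hf hg hf0 hg0 F G hF hG hFfin hGfin y₀ hy₀ q hq hIq
    rw [heqp, heqq]
    apply setIntegral_mono_on hintp hintq measurableSet_Ioi
    intro y hy
    have hy' : (0:ℝ) < y := hy
    have hfactor : y ^ (q - 1) / y₀ ^ q = (y ^ (p - 1) / y₀ ^ p) * ((y / y₀) ^ (q - p)) := by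
      rw [Real.div_rpow (le_of_lt hy') (le_of_lt hy₀)]
      rw [div_mul_div_comm, ← Real.rpow_add hy', ← Real.rpow_add hy₀]
      congr 2 <;> ring
    have hwp : (0:ℝ) ≤ y ^ (p - 1) / y₀ ^ p := by positivity
    rcases lt_trichotomy y y₀ with hc | hc | hc
    · have hd : F y - G y ≤ 0 := sub_nonpos.mpr (hsign₁ y hy' hc)
      have hle1 : (y / y₀) ^ (q - p) ≤ 1 :=
        Real.rpow_le_one (by positivity) (by rw [div_le_one hy₀]; linarith) (by linarith)
      have hw : y ^ (q - 1) / y₀ ^ q ≤ y ^ (p - 1) / y₀ ^ p := by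
        rw [hfactor]
        exact mul_le_of_le_one_right hwp hle1
      exact mul_le_mul_of_nonpos_right hw hd
    · subst hc
      apply le_of_eq
      have hone : ∀ r : ℝ, y ^ (r - 1) / y ^ r = 1 / y := by
        intro r
        have hne : y ^ r ≠ 0 := by positivity
        rw [Real.rpow_sub hy', Real.rpow_one, div_div, mul_comm y, ← div_div, div_self hne]
      rw [hone, hone]
    · have hd : 0 ≤ F y - G y := sub_nonneg.mpr (hsign₂ y hc)
      have hle1 : (1:ℝ) ≤ (y / y₀) ^ (q - p) :=
        Real.one_le_rpow (by rw [le_div_iff₀ hy₀]; linarith) (by linarith)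
      have hw : y ^ (p - 1) / y₀ ^ p ≤ y ^ (q - 1) / y₀ ^ q := by
        rw [hfactor]
        exact le_mul_of_one_le_right hwp hle1
      exact mul_le_mul_of_nonneg_right hw hd
  refine ⟨main, ?_⟩
  intro p₀ p hp₀ hp hI₀ hI h0
  have h1 := main p₀ p hp₀ (le_of_lt hp) hI₀ hI
  have hc₀ : (0:ℝ) < 1 / (p₀ * y₀ ^ p₀) :=
    one_div_pos.mpr (mul_pos hp₀ (Real.rpow_pos_of_pos hy₀ p₀))
  have hcp : (0:ℝ) < 1 / (p * y₀ ^ p) :=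
    one_div_pos.mpr (mul_pos (lt_trans hp₀ hp) (Real.rpow_pos_of_pos hy₀ p))
  have h2 : 0 ≤ (1 / (p * y₀ ^ p)) * ∫ x, (f x ^ p - g x ^ p) :=
    le_trans (mul_nonneg (le_of_lt hc₀) h0) h1
  nlinarith [mul_pos hcp hcp]
end
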